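/- Let B be the bilateral backward shift on ℓ^p(ℤ, ω) with sup_{n∈ℤ} ω_n/ω_{n+1} < ∞, and let Γ ⊂ ℂ with Γ \ {0} non-empty. Suppose x, y ∈ ℓ^p(ℤ, ω) with y ≠ 0, y_{k_0} ≠ 0, and there are λ_i ∈ Γ \ {0} and strictly increasing n_i with ‖λ_i B^{n_i} x − y‖ → 0. Then ω_{k_0 + n_i}/|λ_i| → 0 as i → ∞. -/

import Mathlib

/-! Evaluation at `k` has norm at most `1 / ω k` on `ℓ^p(ω)`, so `λ_i x_{k₀+n_i} → y_{k₀} ≠ 0`.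
Since `∑ (|x_k| ω_k)^p < ∞`, also `|x_k| ω_k → 0` along the injective sequence `k₀ + n_i`.
Dividing, `ω_{k₀+n_i} / |λ_i| = |x_{k₀+n_i}| ω_{k₀+n_i} / |λ_i x_{k₀+n_i}| → 0`. -/

open MeasureTheory Filter Topology
open scoped ENNReal

noncomputable section

/-- The weighted measure on the index set `I` giving the point `k` mass `(ω k) ^ p`,
so that `Lp ℂ p (wMeasure p ω)` is the weighted sequence space `ℓ^p(I, ω)`. -/
def wMeasure {I : Type*} [MeasurableSpace I] (p : ENNReal) (ω : I → ℝ) : Measure I :=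
  Measure.sum (fun k => ENNReal.ofReal ((ω k) ^ p.toReal) • Measure.dirac k)

section WeightedSpace

variable {I : Type*} [MeasurableSpace I] [MeasurableSingletonClass I] {p : ℝ≥0∞} {ω : I → ℝ}

lemma lintegral_wMeasure (f : I → ℝ≥0∞) :
    ∫⁻ k, f k ∂(wMeasure p ω) = ∑' k, f k * ENNReal.ofReal (ω k ^ p.toReal) := by
  simp only [wMeasure, lintegral_sum_measure, lintegral_smul_measure, lintegral_dirac, smul_eq_mul,
    mul_comm]

lemma wMeasure_singleton (j : I) : wMeasure p ω {j} = ENNReal.ofReal (ω j ^ p.toReal) := by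
  rw [wMeasure, Measure.sum_apply _ (measurableSet_singleton j), tsum_eq_single j]
  · simp
  · intro k hk
    simp [hk]

lemma eq_of_ae_eq_wMeasure {E : Type*} (hω : ∀ k, 0 < ω k) {f g : I → E}
    (h : f =ᵐ[wMeasure p ω] g) : f = g := by
  funext k
  by_contra hk
  have hpos : 0 < wMeasure p ω {k} := by
    rw [wMeasure_singleton]
    exact ENNReal.ofReal_pos.2 (Real.rpow_pos_of_pos (hω k) _)
  exact hpos.ne' (measure_mono_null (by simpa using hk) h)

lemma eLpNorm_wMeasure_rpow {E : Type*} [ENorm E] (hω : ∀ k, 0 < ω k) (hp0 : p ≠ 0)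
    (hp : p ≠ ∞) (f : I → E) :
    eLpNorm f p (wMeasure p ω) ^ p.toReal = ∑' k, (‖f k‖ₑ * ENNReal.ofReal (ω k)) ^ p.toReal := by
  have hpr : 0 < p.toReal := ENNReal.toReal_pos hp0 hp
  rw [eLpNorm_eq_lintegral_rpow_enorm_toReal hp0 hp, ← ENNReal.rpow_mul, one_div_mul_cancel hpr.ne',
    ENNReal.rpow_one, lintegral_wMeasure]
  congr 1 with k
  rw [ENNReal.mul_rpow_of_nonneg _ _ hpr.le, ENNReal.ofReal_rpow_of_pos (hω k)]

lemma enorm_mul_le_eLpNorm {E : Type*} [ENorm E] (hω : ∀ k, 0 < ω k) (hp0 : p ≠ 0)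
    (hp : p ≠ ∞) (f : I → E) (k : I) :
    ‖f k‖ₑ * ENNReal.ofReal (ω k) ≤ eLpNorm f p (wMeasure p ω) := by
  have hpr : 0 < p.toReal := ENNReal.toReal_pos hp0 hp
  rw [← ENNReal.rpow_le_rpow_iff hpr, eLpNorm_wMeasure_rpow hω hp0 hp]
  exact ENNReal.le_tsum k

lemma tendsto_enorm_mul_cofinite_of_eLpNorm_ne_top {E : Type*} [ENorm E] (hω : ∀ k, 0 < ω k)
    (hp0 : p ≠ 0) (hp : p ≠ ∞) {f : I → E} (hf : eLpNorm f p (wMeasure p ω) ≠ ∞) :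
    Tendsto (fun k => ‖f k‖ₑ * ENNReal.ofReal (ω k)) cofinite (𝓝 0) := by
  have hpr : 0 < p.toReal := ENNReal.toReal_pos hp0 hp
  have hpow : Tendsto (fun k => (‖f k‖ₑ * ENNReal.ofReal (ω k)) ^ p.toReal) cofinite (𝓝 0) := by
    refine ENNReal.tendsto_cofinite_zero_of_tsum_ne_top ?_
    rw [← eLpNorm_wMeasure_rpow hω hp0 hp]
    exact ENNReal.rpow_ne_top_of_nonneg hpr.le hf
  have := (ENNReal.continuous_rpow_const (y := p.toReal⁻¹)).tendsto 0 |>.comp hpow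
  rw [ENNReal.zero_rpow_of_pos (inv_pos.2 hpr)] at this
  refine this.congr fun k => ?_
  simp [← ENNReal.rpow_mul, mul_inv_cancel₀ hpr.ne']

lemma Lp.smul_apply_of_wMeasure (hω : ∀ k, 0 < ω k) (c : ℂ) (f : Lp ℂ p (wMeasure p ω)) (k : I) :
    (c • f) k = c * f k :=
  congrFun (eq_of_ae_eq_wMeasure hω (Lp.coeFn_smul c f)) k

lemma Lp.sub_apply_of_wMeasure (hω : ∀ k, 0 < ω k) (f g : Lp ℂ p (wMeasure p ω)) (k : I) :
    (f - g) k = f k - g k :=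
  congrFun (eq_of_ae_eq_wMeasure hω (Lp.coeFn_sub f g)) k

end WeightedSpace

section LpWeighted

variable {I : Type*} [MeasurableSpace I] [MeasurableSingletonClass I] {p : ℝ≥0∞} [Fact (1 ≤ p)]
  {ω : I → ℝ}

lemma Lp.norm_apply_mul_le_norm (hω : ∀ k, 0 < ω k) (hp : p ≠ ∞) (f : Lp ℂ p (wMeasure p ω))
    (k : I) : ‖f k‖ * ω k ≤ ‖f‖ := by
  have h := ENNReal.toReal_mono (Lp.eLpNorm_ne_top f)
    (enorm_mul_le_eLpNorm hω (one_pos.trans_le Fact.out).ne' hp f k)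
  rwa [ENNReal.toReal_mul, toReal_enorm, ENNReal.toReal_ofReal (hω k).le, ← Lp.norm_def] at h

lemma Lp.tendsto_norm_apply_mul_cofinite (hω : ∀ k, 0 < ω k) (hp : p ≠ ∞)
    (f : Lp ℂ p (wMeasure p ω)) : Tendsto (fun k => ‖f k‖ * ω k) cofinite (𝓝 0) := by
  have h := (ENNReal.tendsto_toReal ENNReal.zero_ne_top).comp
    (tendsto_enorm_mul_cofinite_of_eLpNorm_ne_top hω (one_pos.trans_le Fact.out).ne' hp
      (Lp.eLpNorm_ne_top f))
  refine h.congr fun k => ?_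
  simp [ENNReal.toReal_ofReal (hω k).le]

lemma Lp.tendsto_apply_of_wMeasure (hω : ∀ k, 0 < ω k) (hp : p ≠ ∞) {ι : Type*} {l : Filter ι}
    {f : ι → Lp ℂ p (wMeasure p ω)} {g : Lp ℂ p (wMeasure p ω)} (h : Tendsto f l (𝓝 g)) (k : I) :
    Tendsto (fun i => f i k) l (𝓝 (g k)) := by
  rw [tendsto_iff_norm_sub_tendsto_zero] at h ⊢
  refine squeeze_zero (fun i => norm_nonneg _) (fun i => ?_) (by simpa using h.div_const (ω k))
  rw [le_div_iff₀ (hω k), ← Lp.sub_apply_of_wMeasure hω]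
  exact Lp.norm_apply_mul_le_norm hω hp _ k

end LpWeighted

lemma Lp.pow_apply_of_shift {p : ℝ≥0∞} [Fact (1 ≤ p)] {μ : Measure ℤ} {B : Lp ℂ p μ →L[ℂ] Lp ℂ p μ}
    (hB : ∀ x k, B x k = x (k + 1)) (m : ℕ) (x : Lp ℂ p μ) (k : ℤ) :
    (B ^ m) x k = x (k + m) := by
  induction m generalizing x with
  | zero => simp
  | succ m ih =>
    rw [pow_succ]
    change (B ^ m) (B x) k = _
    rw [ih, hB]
    push_cast
    ring_nf

lemma tendsto_div_of_tendsto_mul {ι 𝕜 : Type*} [NormedField 𝕜] {l : Filter ι} {a b s : ι → 𝕜}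
    {c : 𝕜} (hc : c ≠ 0) (hsa : Tendsto (fun i => s i * a i) l (𝓝 0))
    (hbs : Tendsto (fun i => b i * s i) l (𝓝 c)) : Tendsto (fun i => a i / b i) l (𝓝 0) := by
  have hquot := hsa.div hbs hc
  rw [zero_div] at hquot
  refine hquot.congr' ?_
  filter_upwards [hbs.eventually_ne hc] with i hi
  rw [Pi.div_apply, mul_comm (b i), mul_div_mul_left _ _ (right_ne_zero_of_mul hi)]

theorem stmt11_general (p : ENNReal) [Fact (1 ≤ p)] (hp : p ≠ ∞) (ω : ℤ → ℝ) (hω : ∀ k, 0 < ω k)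
    (B : Lp ℂ p (wMeasure p ω) →L[ℂ] Lp ℂ p (wMeasure p ω))
    (hB : ∀ (x : Lp ℂ p (wMeasure p ω)) (k : ℤ), B x k = x (k + 1))
    (x y : Lp ℂ p (wMeasure p ω)) (k₀ : ℤ) (hk₀ : y k₀ ≠ 0)
    (lam : ℕ → ℂ)
    (n : ℕ → ℕ) (hn : StrictMono n)
    (hconv : Tendsto (fun i => lam i • (B ^ n i) x) atTop (nhds y)) :
    Tendsto (fun i => ω (k₀ + (n i : ℤ)) / ‖lam i‖) atTop (nhds 0) := by
  have hshift : Tendsto (fun i => k₀ + (n i : ℤ)) atTop cofinite := by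
    rw [← Nat.cofinite_eq_atTop]
    exact Function.Injective.tendsto_cofinite fun a b h => hn.injective (by simpa using h)
  have hdecay := (Lp.tendsto_norm_apply_mul_cofinite hω hp x).comp hshift
  have heval : Tendsto (fun i => lam i * x (k₀ + n i)) atTop (𝓝 (y k₀)) := by
    simpa only [Lp.smul_apply_of_wMeasure hω, Lp.pow_apply_of_shift hB] using
      Lp.tendsto_apply_of_wMeasure hω hp hconv k₀
  exact tendsto_div_of_tendsto_mul (norm_ne_zero_iff.2 hk₀) hdecay
    (by simpa only [norm_mul] using heval.norm)

/-- if `λ_i • B ^ (n_i) x → y` in `ℓ^p(ℤ, ω)` with `y (k₀) ≠ 0` and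
`λ_i ∈ Γ \ {0}`, then `ω (k₀ + n_i) / |λ_i| → 0`. -/
theorem stmt11 (p : ENNReal) [Fact (1 ≤ p)] (hp : p ≠ ∞) (ω : ℤ → ℝ) (hω : ∀ k, 0 < ω k)
    (hbdd : ∃ C : ℝ, ∀ k : ℤ, ω k / ω (k + 1) ≤ C)
    (B : Lp ℂ p (wMeasure p ω) →L[ℂ] Lp ℂ p (wMeasure p ω))
    (hB : ∀ (x : Lp ℂ p (wMeasure p ω)) (k : ℤ), B x k = x (k + 1))
    (Γ : Set ℂ) (hΓ : (Γ \ {0}).Nonempty)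
    (x y : Lp ℂ p (wMeasure p ω)) (hy : y ≠ 0) (k₀ : ℤ) (hk₀ : y k₀ ≠ 0)
    (lam : ℕ → ℂ) (hlam : ∀ i, lam i ∈ Γ \ {0})
    (n : ℕ → ℕ) (hn : StrictMono n)
    (hconv : Tendsto (fun i => lam i • (B ^ n i) x) atTop (nhds y)) :
    Tendsto (fun i => ω (k₀ + (n i : ℤ)) / ‖lam i‖) atTop (nhds 0) :=
  stmt11_general p hp ω hω B hB x y k₀ hk₀ lam n hn hconv
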